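/- arXiv:1703.08050 — 2 statements merged into one kernel-verified Lean document; each statement's English description precedes it below -/
import Mathlib

section
/- Let P and P̃ be d×d real symmetric positive definite matrices. Define the Power-Euclidean distance d_α(P, P̃) = (1/α)‖P^α − P̃^α‖_F for α > 0, where matrix powers are defined spectrally. Then lim_{α → 0⁺} d_α(P, P̃) = ‖log P − log P̃‖_F, the Log-Euclidean distance. -/
open Matrix

/-- Frobenius norm of a real square matrix. -/
noncomputable def frobNorm {d : ℕ} (A : Matrix (Fin d) (Fin d) ℝ) : ℝ :=
  Real.sqrt ((Aᵀ * A).trace)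

lemma frobNorm_smul {d : ℕ} (c : ℝ) (hc : 0 ≤ c) (A : Matrix (Fin d) (Fin d) ℝ) :
    frobNorm (c • A) = c * frobNorm A := by
  unfold frobNorm
  rw [transpose_smul, smul_mul_assoc, mul_smul_comm, smul_smul, trace_smul, smul_eq_mul,
    Real.sqrt_mul (mul_nonneg hc hc), Real.sqrt_mul_self hc]

lemma frobNorm_continuous {d : ℕ} : Continuous (fun A : Matrix (Fin d) (Fin d) ℝ => frobNorm A) :=
  Real.continuous_sqrt.comp ((continuous_id.matrix_transpose.matrix_mul continuous_id).matrix_trace)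

lemma tendsto_rpow_slope {x : ℝ} (hx : 0 < x) :
    Filter.Tendsto (fun α : ℝ => (x ^ α - 1) / α) (nhdsWithin 0 (Set.Ioi 0))
      (nhds (Real.log x)) := by
  have h := (Real.hasStrictDerivAt_const_rpow hx (0:ℝ)).hasDerivAt
  rw [hasDerivAt_iff_tendsto_slope] at h
  have h2 : Filter.Tendsto (slope (fun y : ℝ => x ^ y) (0:ℝ)) (nhdsWithin (0:ℝ) (Set.Ioi 0))
      (nhds (x ^ (0:ℝ) * Real.log x)) :=
    h.mono_left (nhdsWithin_mono _ (fun a (ha : a ∈ Set.Ioi (0:ℝ)) => ne_of_gt ha))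
  rw [Real.rpow_zero, one_mul] at h2
  refine h2.congr (fun α => ?_)
  simp [slope, Real.rpow_zero, div_eq_inv_mul]

theorem powerEuclidean_tendsto_logEuclidean (d : ℕ)
    (P Pt U V : Matrix (Fin d) (Fin d) ℝ) (lam mu : Fin d → ℝ)
    (hlam : ∀ i, 0 < lam i) (hmu : ∀ i, 0 < mu i)
    (hU : U ∈ Matrix.orthogonalGroup (Fin d) ℝ)
    (hV : V ∈ Matrix.orthogonalGroup (Fin d) ℝ)
    (hP : P = U * Matrix.diagonal lam * Uᵀ)
    (hPt : Pt = V * Matrix.diagonal mu * Vᵀ) :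
    Filter.Tendsto
      (fun α : ℝ => (1 / α) *
        frobNorm (U * Matrix.diagonal (fun i => lam i ^ α) * Uᵀ -
                  V * Matrix.diagonal (fun i => mu i ^ α) * Vᵀ))
      (nhdsWithin 0 (Set.Ioi 0))
      (nhds (frobNorm (U * Matrix.diagonal (fun i => Real.log (lam i)) * Uᵀ -
                       V * Matrix.diagonal (fun i => Real.log (mu i)) * Vᵀ))) := by
  have hUU : U * Uᵀ = 1 := by
    have := (Matrix.mem_orthogonalGroup_iff _ _).mp hU
    simpa [Matrix.star_eq_conjTranspose, Matrix.conjTranspose] using this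
  have hVV : V * Vᵀ = 1 := by
    have := (Matrix.mem_orthogonalGroup_iff _ _).mp hV
    simpa [Matrix.star_eq_conjTranspose, Matrix.conjTranspose] using this
  -- the continuous map from diagonal data to the frobenius norm
  set G : (Fin d → ℝ) × (Fin d → ℝ) → ℝ := fun p =>
    frobNorm (U * Matrix.diagonal p.1 * Uᵀ - V * Matrix.diagonal p.2 * Vᵀ) with hG
  have hGcont : Continuous G := by
    apply frobNorm_continuous.comp
    exact ((continuous_const.matrix_mul continuous_fst.matrix_diagonal).matrix_mul
        continuous_const).sub
      ((continuous_const.matrix_mul continuous_snd.matrix_diagonal).matrix_mul continuous_const)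
  have hdata : Filter.Tendsto
      (fun α : ℝ => ((fun i => (lam i ^ α - 1) / α), (fun i => (mu i ^ α - 1) / α)))
      (nhdsWithin 0 (Set.Ioi 0))
      (nhds ((fun i => Real.log (lam i)), (fun i => Real.log (mu i)))) := by
    refine Filter.Tendsto.prodMk_nhds ?_ ?_ <;>
      (rw [tendsto_pi_nhds]; intro i)
    · exact tendsto_rpow_slope (hlam i)
    · exact tendsto_rpow_slope (hmu i)
  have hmain := (hGcont.continuousAt).tendsto.comp hdata
  refine hmain.congr' ?_
  filter_upwards [self_mem_nhdsWithin] with α (hα : 0 < α)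
  show G _ = _
  have key : (1/α) • (U * Matrix.diagonal (fun i => lam i ^ α) * Uᵀ -
      V * Matrix.diagonal (fun i => mu i ^ α) * Vᵀ) =
      U * Matrix.diagonal (fun i => (lam i ^ α - 1) / α) * Uᵀ -
      V * Matrix.diagonal (fun i => (mu i ^ α - 1) / α) * Vᵀ := by
    have e1 : (Matrix.diagonal (fun i => (lam i ^ α - 1) / α) : Matrix (Fin d) (Fin d) ℝ) =
        (1/α) • Matrix.diagonal (fun i => lam i ^ α) - (1/α) • 1 := by
      ext i j
      rcases eq_or_ne i j with h | h
      · subst h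
        simp [Matrix.one_apply, div_eq_inv_mul, mul_sub]
      · simp [Matrix.diagonal_apply_ne _ h, Matrix.one_apply_ne h]
    have e2 : (Matrix.diagonal (fun i => (mu i ^ α - 1) / α) : Matrix (Fin d) (Fin d) ℝ) =
        (1/α) • Matrix.diagonal (fun i => mu i ^ α) - (1/α) • 1 := by
      ext i j
      rcases eq_or_ne i j with h | h
      · subst h
        simp [Matrix.one_apply, div_eq_inv_mul, mul_sub]
      · simp [Matrix.diagonal_apply_ne _ h, Matrix.one_apply_ne h]
    rw [e1, e2]
    simp only [Matrix.sub_mul, Matrix.mul_sub, Matrix.smul_mul, Matrix.mul_smul, Matrix.mul_one]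
    rw [hUU, hVV]
    module
  rw [hG]
  simp only
  rw [← key, frobNorm_smul _ (by positivity), one_div]
end

section
/- Let P be a d×d symmetric positive definite matrix. Then Σ = P^{1/2} is the unique symmetric positive definite minimizer of F(Σ) = log det Σ + tr(Σ⁻¹ P) + D_vN(I, Σ), where D_vN(I, Σ) = tr(−log Σ − I + Σ). -/
/-!
With `Q = √P` and `S` positive definite, expanding the quadratic form gives
`tr(S⁻¹P) + tr S - 2 tr Q = tr((Q - S) S⁻¹ (Q - S))`. Since `log det S = ∑ log λᵢ(S)`, the objective
is `tr(S⁻¹P) + tr S - d`, so `F(S) - F(Q)` is that trace, which is nonnegative and vanishes only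
at `S = Q` because `S⁻¹` is positive definite.
-/

open Matrix

namespace Matrix.PosSemidef

open scoped ComplexOrder

variable {n 𝕜 : Type*} [Fintype n] [RCLike 𝕜] [DecidableEq n] {A : Matrix n n 𝕜}

/-- The positive semidefinite square root of a positive semidefinite matrix
(the definition of Mathlib of December 2024, since removed). -/
noncomputable def sqrt (hA : PosSemidef A) : Matrix n n 𝕜 :=
  hA.1.eigenvectorUnitary.1 * diagonal ((↑) ∘ (√·) ∘ hA.1.eigenvalues) *
    (star hA.1.eigenvectorUnitary : Matrix n n 𝕜)

lemma posSemidef_sqrt (hA : PosSemidef A) : PosSemidef hA.sqrt := by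
  unfold sqrt
  rw [star_eq_conjTranspose]
  apply PosSemidef.mul_mul_conjTranspose_same
  apply PosSemidef.diagonal
  intro i
  simp only [Function.comp_apply, Pi.zero_apply]
  exact_mod_cast Real.sqrt_nonneg _

end Matrix.PosSemidef

/-- The vN-regularized MLE objective: `log det S + tr(S⁻¹ P) + tr(−log S − I + S)`,
where `tr(log S) = ∑ᵢ log λᵢ(S)` is computed spectrally. -/
noncomputable def vnMLEObjective {d : ℕ} (P : Matrix (Fin d) (Fin d) ℝ)
    (S : Matrix (Fin d) (Fin d) ℝ) (hS : S.IsHermitian) : ℝ :=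
  Real.log S.det + (S⁻¹ * P).trace +
    (-(∑ i, Real.log (hS.eigenvalues i)) - (d : ℝ) + S.trace)

namespace Matrix

open scoped ComplexOrder

variable {m n 𝕜 : Type*} [Fintype m] [Fintype n] [RCLike 𝕜]

lemma PosDef.trace_conjTranspose_mul_mul_same_eq_zero_iff {A : Matrix n n 𝕜} (hA : A.PosDef)
    {B : Matrix n m 𝕜} : (Bᴴ * A * B).trace = 0 ↔ B = 0 := by
  rw [(hA.posSemidef.conjTranspose_mul_mul_same B).trace_eq_zero_iff]
  refine ⟨fun h => ext_iff_mulVec.mpr fun x => ?_, fun h => by simp [h]⟩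
  rw [zero_mulVec]
  by_contra hBx
  have hpos := hA.dotProduct_mulVec_pos hBx
  rw [star_mulVec, ← dotProduct_mulVec, mulVec_mulVec, mulVec_mulVec, h] at hpos
  simp at hpos

variable [DecidableEq n]

lemma PosSemidef.sqrt_mul_self {A : Matrix n n 𝕜} (hA : A.PosSemidef) :
    hA.sqrt * hA.sqrt = A := by
  have hU : (star hA.1.eigenvectorUnitary : Matrix n n 𝕜) * hA.1.eigenvectorUnitary.1 = 1 :=
    Unitary.coe_star_mul_self _
  unfold sqrt
  conv_rhs => rw [hA.1.spectral_theorem, Unitary.conjStarAlgAut_apply]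
  simp only [mul_assoc]
  rw [← mul_assoc (star hA.1.eigenvectorUnitary : Matrix n n 𝕜), hU, one_mul,
    ← mul_assoc (diagonal _), diagonal_mul_diagonal]
  congr 3
  funext i
  simp only [Function.comp_apply]
  rw [← RCLike.ofReal_mul, Real.mul_self_sqrt (hA.eigenvalues_nonneg i)]

lemma PosDef.posDef_sqrt {A : Matrix n n 𝕜} (hA : A.PosDef) : hA.posSemidef.sqrt.PosDef := by
  refine hA.posSemidef.posSemidef_sqrt.posDef_iff_isUnit.mpr ?_
  have hAunit : IsUnit (hA.posSemidef.sqrt * hA.posSemidef.sqrt) := by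
    rw [hA.posSemidef.sqrt_mul_self]
    exact hA.isUnit
  exact isUnit_of_mul_isUnit_left hAunit

end Matrix

lemma Matrix.trace_sub_mul_inv_mul_sub {n R : Type*} [Fintype n] [DecidableEq n] [CommRing R]
    {S : Matrix n n R} (hS : IsUnit S.det) (Q : Matrix n n R) :
    ((Q - S) * S⁻¹ * (Q - S)).trace = (S⁻¹ * (Q * Q)).trace + S.trace - 2 * Q.trace := by
  have hSS : S⁻¹ * S = 1 := nonsing_inv_mul S hS
  have hcycle : (S⁻¹ * Q * S).trace = Q.trace := by
    rw [trace_mul_cycle, mul_nonsing_inv S hS, one_mul]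
  have hexpand : S⁻¹ * (Q - S) * (Q - S) =
      S⁻¹ * (Q * Q) - S⁻¹ * Q * S - (S⁻¹ * S) * Q + (S⁻¹ * S) * S := by
    noncomm_ring
  rw [← trace_mul_cycle, hexpand, hSS, one_mul, one_mul, trace_add, trace_sub, trace_sub, hcycle]
  ring

lemma Matrix.IsHermitian.log_det_eq_sum_log_eigenvalues {n : Type*} [Fintype n] [DecidableEq n]
    {S : Matrix n n ℝ} (hS : S.IsHermitian) (hdet : S.det ≠ 0) :
    Real.log S.det = ∑ i, Real.log (hS.eigenvalues i) := by
  have hprod : S.det = ∏ i, hS.eigenvalues i := by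
    simpa using hS.det_eq_prod_eigenvalues
  rw [hprod] at hdet ⊢
  exact Real.log_prod fun i _ => Finset.prod_ne_zero_iff.mp hdet i (Finset.mem_univ i)

lemma vnMLEObjective_eq {d : ℕ} (P : Matrix (Fin d) (Fin d) ℝ) {S : Matrix (Fin d) (Fin d) ℝ}
    (hS : S.PosDef) : vnMLEObjective P S hS.1 = (S⁻¹ * P).trace + S.trace - d := by
  rw [vnMLEObjective, hS.1.log_det_eq_sum_log_eigenvalues hS.det_pos.ne']
  ring

lemma vnMLEObjective_sub_sqrt {d : ℕ} {P S : Matrix (Fin d) (Fin d) ℝ} (hP : P.PosDef)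
    (hS : S.PosDef) :
    vnMLEObjective P S hS.1 - vnMLEObjective P hP.posSemidef.sqrt hP.posDef_sqrt.1 =
      ((hP.posSemidef.sqrt - S)ᴴ * S⁻¹ * (hP.posSemidef.sqrt - S)).trace := by
  set Q := hP.posSemidef.sqrt
  have hQ : Q.PosDef := hP.posDef_sqrt
  have hQQ : Q * Q = P := hP.posSemidef.sqrt_mul_self
  have hQinv : Q⁻¹ * P = Q := by
    rw [← hQQ, ← Matrix.mul_assoc, nonsing_inv_mul Q hQ.det_pos.ne'.isUnit, Matrix.one_mul]
  rw [vnMLEObjective_eq P hS, vnMLEObjective_eq P hQ, hQinv, conjTranspose_sub, hQ.1.eq, hS.1.eq,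
    trace_sub_mul_inv_mul_sub hS.det_pos.ne'.isUnit, hQQ]
  ring

theorem sqrt_unique_minimizer_vnMLE (d : ℕ) (P : Matrix (Fin d) (Fin d) ℝ)
    (hP : P.PosDef) :
    ∀ S : Matrix (Fin d) (Fin d) ℝ, ∀ hS : S.PosDef,
      vnMLEObjective P hP.posSemidef.sqrt hP.posSemidef.posSemidef_sqrt.1 ≤
        vnMLEObjective P S hS.1 ∧
      (vnMLEObjective P S hS.1 =
          vnMLEObjective P hP.posSemidef.sqrt hP.posSemidef.posSemidef_sqrt.1 →
        S = hP.posSemidef.sqrt) := by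
  intro S hS
  have hgap := vnMLEObjective_sub_sqrt hP hS
  have hgap_nonneg := (hS.inv.posSemidef.conjTranspose_mul_mul_same
    (hP.posSemidef.sqrt - S)).trace_nonneg
  refine ⟨sub_nonneg.mp (hgap ▸ hgap_nonneg), fun heq => ?_⟩
  have hgap_zero := hgap.symm.trans (sub_eq_zero.mpr heq)
  exact (sub_eq_zero.mp (hS.inv.trace_conjTranspose_mul_mul_same_eq_zero_iff.mp hgap_zero)).symm
end
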